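/- For the class H = {h_{a,b}} of lexicographic initial segments on ℕ×ℕ and the perturbation type U of Theorem 4.3, for every finite labelled sample S and every a ∈ ℕ: the empirical robust risk of h_{a,∞} is at most that of h_{a,b} for every b ∈ ℕ, i.e., R_U(h_{a,∞};S) ≤ R_U(h_{a,b};S). Consequently the subclass H' = {h_{a,∞} : a ∈ ℕ} always contains an empirical robust risk minimizer of H. -/

import Mathlib

/-!
Every perturbation set `U x` lies in the column of `x` and contains `x` and `(x.1, 0)`. As
`h_{a,∞}` is constant on columns, it errs robustly on a negative label only if column `x.1` is
at most `a`, and then `h_{a,b}` errs at `(x.1, 0)`; on a positive label only if that column is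
beyond `a`, and then `h_{a,b}` errs at `x`. Once `a ≥ M` exceeds every column met by the sample,
all `h_{a,b}` have the same risk as `h_{M,∞}`, so a risk minimizer is found among the finitely many
`h_{a,∞}` with `a ≤ M`.
-/

/-- The robust loss of hypothesis `f` on `(x,y)` with respect to `U`. -/
def RobLoss {α : Type*} (U : α → Set α) (f : α → Bool) (x : α) (y : Bool) : Prop :=
  ∃ z ∈ U x, f z ≠ y

open Classical in
/-- The empirical robust risk of `f` on the finite labelled sample `S`. -/
noncomputable def empRobRisk {α : Type*} (U : α → Set α) (f : α → Bool)
    (S : List (α × Bool)) : ℝ :=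
  ((S.map fun p => if RobLoss U f p.1 p.2 then (1 : ℝ) else 0).sum) / S.length

/-- The lexicographic initial segment `h_{a,b}` on `ℕ × ℕ` for `a, b ∈ ℕ ∪ {0,∞}`. -/
def hLex (a b : ℕ∞) (p : ℕ × ℕ) : Bool :=
  decide ((p.1 : ℕ∞) < a ∨ ((p.1 : ℕ∞) = a ∧ (p.2 : ℕ∞) ≤ b))

/-- The proof-checking perturbation type of Theorem 4.3. -/
def Ulex (Proves : ℕ → ℕ → Prop) : ℕ × ℕ → Set (ℕ × ℕ)
  | (i, 0) => {(i, 0)} ∪ {q | ∃ j, q = (i, j) ∧ Proves j i}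
  | (i, j + 1) => {(i, 0), (i, j + 1)}

theorem robLoss_iff_of_forall_mem_eq {α : Type*} {U : α → Set α} {f : α → Bool} {x z₀ : α}
    {c y : Bool} (hz₀ : z₀ ∈ U x) (hf : ∀ z ∈ U x, f z = c) : RobLoss U f x y ↔ c ≠ y := by
  constructor
  · rintro ⟨z, hz, hne⟩
    rwa [← hf z hz]
  · intro hc
    exact ⟨z₀, hz₀, (hf z₀ hz₀).symm ▸ hc⟩

theorem empRobRisk_mono {α : Type*} {U : α → Set α} {f g : α → Bool} {S : List (α × Bool)}
    (h : ∀ p ∈ S, RobLoss U f p.1 p.2 → RobLoss U g p.1 p.2) :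
    empRobRisk U f S ≤ empRobRisk U g S := by
  classical
  refine div_le_div_of_nonneg_right (List.sum_le_sum fun p hp => ?_) (Nat.cast_nonneg _)
  split_ifs with hf hg
  exacts [le_rfl, absurd (h p hp hf) hg, zero_le_one, le_rfl]

theorem empRobRisk_congr {α : Type*} {U : α → Set α} {f g : α → Bool} {S : List (α × Bool)}
    (h : ∀ p ∈ S, RobLoss U f p.1 p.2 ↔ RobLoss U g p.1 p.2) :
    empRobRisk U f S = empRobRisk U g S :=
  (empRobRisk_mono fun p hp => (h p hp).1).antisymm (empRobRisk_mono fun p hp => (h p hp).2)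

section Ulex

variable {P : ℕ → ℕ → Prop}

theorem self_mem_Ulex (x : ℕ × ℕ) : x ∈ Ulex P x := by
  obtain ⟨i, _ | j⟩ := x
  · exact Or.inl rfl
  · exact Or.inr rfl

theorem fst_zero_mem_Ulex (x : ℕ × ℕ) : (x.1, 0) ∈ Ulex P x := by
  obtain ⟨i, _ | j⟩ := x <;> exact Or.inl rfl

theorem fst_eq_of_mem_Ulex {x z : ℕ × ℕ} (hz : z ∈ Ulex P x) : z.1 = x.1 := by
  obtain ⟨i, _ | j⟩ := x
  · rcases hz with rfl | ⟨j, rfl, -⟩ <;> rfl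
  · rcases hz with rfl | rfl <;> rfl

end Ulex

theorem hLex_top_apply (a : ℕ∞) (z : ℕ × ℕ) : hLex a ⊤ z = decide ((z.1 : ℕ∞) ≤ a) := by
  simp [hLex, le_iff_lt_or_eq]

theorem hLex_fst_zero (a b : ℕ∞) (i : ℕ) : hLex a b (i, 0) = decide ((i : ℕ∞) ≤ a) := by
  simp [hLex, le_iff_lt_or_eq (b := a)]

theorem hLex_of_lt {a : ℕ∞} (b : ℕ∞) {z : ℕ × ℕ} (h : (z.1 : ℕ∞) < a) : hLex a b z = true := by
  simp [hLex, h]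

theorem hLex_of_gt {a : ℕ∞} (b : ℕ∞) {z : ℕ × ℕ} (h : a < z.1) : hLex a b z = false := by
  simp [hLex, h.not_gt, h.ne']

section RobLoss

variable {P : ℕ → ℕ → Prop} {x : ℕ × ℕ} {y : Bool}

theorem robLoss_hLex_top_iff (a : ℕ∞) :
    RobLoss (Ulex P) (hLex a ⊤) x y ↔ decide ((x.1 : ℕ∞) ≤ a) ≠ y :=
  robLoss_iff_of_forall_mem_eq (self_mem_Ulex x) fun z hz => by
    rw [hLex_top_apply, fst_eq_of_mem_Ulex hz]

theorem robLoss_hLex_iff_of_lt {a : ℕ∞} (b : ℕ∞) (hx : (x.1 : ℕ∞) < a) :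
    RobLoss (Ulex P) (hLex a b) x y ↔ y = false := by
  rw [robLoss_iff_of_forall_mem_eq (self_mem_Ulex x) fun z hz =>
    hLex_of_lt b ((fst_eq_of_mem_Ulex hz).symm ▸ hx)]
  cases y <;> simp

theorem RobLoss.hLex_of_hLex_top {a : ℕ∞} (b : ℕ∞) (h : RobLoss (Ulex P) (hLex a ⊤) x y) :
    RobLoss (Ulex P) (hLex a b) x y := by
  rw [robLoss_hLex_top_iff] at h
  by_cases hxa : (x.1 : ℕ∞) ≤ a
  · refine ⟨(x.1, 0), fst_zero_mem_Ulex x, ?_⟩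
    rwa [hLex_fst_zero]
  · rw [decide_eq_false hxa] at h
    exact ⟨x, self_mem_Ulex x, (hLex_of_gt b (not_le.1 hxa)).symm ▸ h⟩

end RobLoss

theorem empRobRisk_hLex_top_le (P : ℕ → ℕ → Prop) (S : List ((ℕ × ℕ) × Bool)) (a b : ℕ∞) :
    empRobRisk (Ulex P) (hLex a ⊤) S ≤ empRobRisk (Ulex P) (hLex a b) S :=
  empRobRisk_mono fun _ _ => RobLoss.hLex_of_hLex_top b

theorem empRobRisk_hLex_eq_of_le {P : ℕ → ℕ → Prop} {S : List ((ℕ × ℕ) × Bool)} {M : ℕ}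
    (hM : ∀ p ∈ S, p.1.1 < M) {a : ℕ∞} (b : ℕ∞) (ha : (M : ℕ∞) ≤ a) :
    empRobRisk (Ulex P) (hLex a b) S = empRobRisk (Ulex P) (hLex M ⊤) S := by
  refine empRobRisk_congr fun p hp => ?_
  have hpM : (p.1.1 : ℕ∞) < M := by exact_mod_cast hM p hp
  rw [robLoss_hLex_iff_of_lt b (hpM.trans_le ha), robLoss_hLex_iff_of_lt ⊤ hpM]

theorem exists_forall_fst_fst_lt {β γ : Type*} (S : List ((ℕ × β) × γ)) :
    ∃ M : ℕ, ∀ p ∈ S, p.1.1 < M :=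
  ⟨(S.map (·.1.1)).sum + 1, fun _ hp =>
    Nat.lt_succ_of_le (List.le_sum_of_mem (List.mem_map_of_mem hp))⟩

/-- For the lexicographic initial segment class and the perturbation type of
Theorem 4.3: for every finite labelled sample `S` and every `a ∈ ℕ`, the empirical
robust risk of `h_{a,∞}` is at most that of `h_{a,b}` for every `b ∈ ℕ`.
Consequently, the subclass `H' = {h_{a,∞} : a ∈ ℕ}` always contains an empirical
robust risk minimizer of `H`. -/
theorem hLex_top_dominates (Proves : ℕ → ℕ → Prop)
    (S : List ((ℕ × ℕ) × Bool)) :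
    (∀ a b : ℕ, empRobRisk (Ulex Proves) (hLex (a : ℕ∞) ⊤) S ≤
      empRobRisk (Ulex Proves) (hLex (a : ℕ∞) (b : ℕ∞)) S) ∧
    (∃ a : ℕ, ∀ a' b' : ℕ∞, empRobRisk (Ulex Proves) (hLex (a : ℕ∞) ⊤) S ≤
      empRobRisk (Ulex Proves) (hLex a' b') S) := by
  refine ⟨fun a b => empRobRisk_hLex_top_le Proves S a b, ?_⟩
  obtain ⟨M, hM⟩ := exists_forall_fst_fst_lt S
  obtain ⟨a₀, -, ha₀⟩ := (Finset.range (M + 1)).exists_min_image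
    (fun a : ℕ => empRobRisk (Ulex Proves) (hLex a ⊤) S) ⟨0, by simp⟩
  refine ⟨a₀, fun a' b' => ?_⟩
  by_cases hMa : (M : ℕ∞) ≤ a'
  · rw [empRobRisk_hLex_eq_of_le hM b' hMa]
    exact ha₀ M (by simp)
  · obtain ⟨a, rfl⟩ := ENat.ne_top_iff_exists.1 (ne_top_of_lt (not_le.1 hMa))
    have ha : a < M := by exact_mod_cast not_le.1 hMa
    exact (ha₀ a (Finset.mem_range.2 (Nat.lt_succ_of_lt ha))).trans
      (empRobRisk_hLex_top_le Proves S a b')
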